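/- The integral over all real t of Φ(−t)·Φ(t) dt equals 1/√π, where Φ is the standard normal CDF. -/

import Mathlib

/-!
The integrand has the explicit primitive `t Φ(t) Φ(-t) + φ(t) (1 - 2 Φ(t)) + Φ(√2 t) / √π`,
which tends to `0` at `-∞` and to `1 / √π` at `+∞`; as the integrand is nonnegative, these limits
also give its integrability. The boundary term `t Φ(t) Φ(-t)` vanishes at `±∞` by the Mills-ratio
bound `t Φ(-t) ≤ φ(t)`.
-/

open MeasureTheory Real Filter

noncomputable def phi (t : ℝ) : ℝ := Real.exp (-t^2/2) / Real.sqrt (2*Real.pi)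

noncomputable def Phi (x : ℝ) : ℝ := ∫ s in Set.Iic x, phi s

open Set ProbabilityTheory Topology

lemma integrable_of_hasDerivAt_of_nonneg {g g' : ℝ → ℝ} {l l' : ℝ}
    (hderiv : ∀ x, HasDerivAt g (g' x) x) (hg' : ∀ x, 0 ≤ g' x)
    (hbot : Tendsto g atBot (𝓝 l)) (htop : Tendsto g atTop (𝓝 l')) : Integrable g' := by
  rw [← integrableOn_univ, ← Iic_union_Ioi (a := 0), integrableOn_union]
  refine ⟨?_, integrableOn_Ioi_deriv_of_nonneg' (fun x _ ↦ hderiv x) (fun x _ ↦ hg' x) htop⟩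
  have hreflect : IntegrableOn (fun x ↦ -g' (-x)) (Ioi 0) :=
    integrableOn_Ioi_deriv_of_nonpos' (g := fun x ↦ g (-x))
      (fun x _ ↦ by simpa [Function.comp_def] using (hderiv (-x)).comp x (hasDerivAt_neg x))
      (fun x _ ↦ neg_nonpos.mpr (hg' (-x))) (hbot.comp tendsto_neg_atTop_atBot)
  rw [← (Measure.measurePreserving_neg volume).integrableOn_comp_preimage
    (Homeomorph.neg ℝ).measurableEmbedding, neg_preimage, neg_Iic, neg_zero,
    integrableOn_Ici_iff_integrableOn_Ioi]
  simpa [Function.comp_def] using hreflect.neg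

lemma phi_eq_gaussianPDFReal : phi = gaussianPDFReal 0 1 := by
  ext t
  simp [phi, gaussianPDFReal_def, div_eq_inv_mul]

lemma phi_nonneg (t : ℝ) : 0 ≤ phi t := phi_eq_gaussianPDFReal ▸ gaussianPDFReal_nonneg 0 1 t

lemma integrable_phi : Integrable phi := phi_eq_gaussianPDFReal ▸ integrable_gaussianPDFReal 0 1

lemma integral_phi : ∫ s, phi s = 1 :=
  phi_eq_gaussianPDFReal ▸ integral_gaussianPDFReal_eq_one 0 one_ne_zero

lemma phi_neg (t : ℝ) : phi (-t) = phi t := by simp [phi]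

lemma phi_abs (t : ℝ) : phi |t| = phi t := by simp [phi]

lemma continuous_phi : Continuous phi := by unfold phi; fun_prop

lemma hasDerivAt_phi (t : ℝ) : HasDerivAt phi (-t * phi t) t := by
  have h : HasDerivAt phi (exp (-t ^ 2 / 2) * (-(2 * t) / 2) / √(2 * π)) t := by
    have hchain := ((((hasDerivAt_pow 2 t).fun_neg).div_const 2).exp).div_const (√(2 * π))
    simp only [Nat.cast_ofNat, pow_one, Nat.add_one_sub_one] at hchain
    exact hchain
  convert h using 1
  rw [phi]; ring

lemma tendsto_phi_cocompact : Tendsto phi (cocompact ℝ) (𝓝 0) := by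
  have h := (tendsto_rpow_abs_mul_exp_neg_mul_sq_cocompact (a := 1/2) (by norm_num) 0).div_const
    (√(2 * π))
  rw [zero_div] at h
  refine h.congr fun t ↦ ?_
  simp [phi]; ring_nf

lemma integrable_mul_phi : Integrable fun s ↦ s * phi s := by
  convert (integrable_mul_exp_neg_mul_sq (b := 1/2) (by norm_num)).div_const (√(2 * π)) using 2
  simp [phi]; ring_nf

lemma integral_Ioi_mul_phi (t : ℝ) : ∫ s in Ioi t, s * phi s = phi t := by
  have h := integral_Ioi_of_hasDerivAt_of_tendsto' (f := fun s ↦ -phi s) (a := t) (m := 0)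
    (fun s _ ↦ by simpa using (hasDerivAt_phi s).fun_neg) integrable_mul_phi.integrableOn
    (by simpa using (tendsto_phi_cocompact.mono_left atTop_le_cocompact).neg)
  simpa using h

lemma Phi_eq_cdf : Phi = cdf (gaussianReal 0 1) := by
  ext x
  rw [cdf_eq_real, measureReal_def, gaussianReal_apply_eq_integral 0 one_ne_zero,
    ENNReal.toReal_ofReal (setIntegral_nonneg measurableSet_Iic fun s _ ↦
      gaussianPDFReal_nonneg 0 1 s), ← phi_eq_gaussianPDFReal, Phi]

lemma Phi_nonneg (x : ℝ) : 0 ≤ Phi x := Phi_eq_cdf ▸ cdf_nonneg _ x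

lemma Phi_le_one (x : ℝ) : Phi x ≤ 1 := Phi_eq_cdf ▸ cdf_le_one _ x

lemma tendsto_Phi_atBot : Tendsto Phi atBot (𝓝 0) := Phi_eq_cdf ▸ tendsto_cdf_atBot _

lemma tendsto_Phi_atTop : Tendsto Phi atTop (𝓝 1) := Phi_eq_cdf ▸ tendsto_cdf_atTop _

lemma integral_Ioi_phi (x : ℝ) : ∫ s in Ioi x, phi s = Phi (-x) := by
  have h := integral_comp_neg_Iic (-x) phi
  simp only [neg_neg, phi_neg] at h
  exact h.symm

lemma Phi_neg (x : ℝ) : Phi (-x) = 1 - Phi x := by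
  have h := intervalIntegral.integral_Iic_add_Ioi (b := x) integrable_phi.integrableOn
    integrable_phi.integrableOn
  rw [integral_phi, integral_Ioi_phi] at h
  change Phi x + Phi (-x) = 1 at h
  linarith

lemma hasDerivAt_Phi (x : ℝ) : HasDerivAt Phi (phi x) x := by
  have hPhi : Phi = fun y ↦ Phi 0 + ∫ s in (0 : ℝ)..y, phi s := by
    ext y
    rw [Phi, Phi, ← intervalIntegral.integral_Iic_sub_Iic integrable_phi.integrableOn
      integrable_phi.integrableOn]
    ring
  rw [hPhi]
  exact (intervalIntegral.integral_hasDerivAt_right integrable_phi.intervalIntegrable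
    (continuous_phi.stronglyMeasurableAtFilter _ _) continuous_phi.continuousAt).const_add _

lemma mul_Phi_neg_le_phi (t : ℝ) : t * Phi (-t) ≤ phi t := by
  rw [← integral_Ioi_phi, ← integral_const_mul, ← integral_Ioi_mul_phi t]
  refine setIntegral_mono_on (integrable_phi.const_mul t).integrableOn
    integrable_mul_phi.integrableOn measurableSet_Ioi fun s hs ↦ ?_
  exact mul_le_mul_of_nonneg_right (le_of_lt hs) (phi_nonneg s)

lemma abs_mul_Phi_mul_Phi_neg_le (t : ℝ) : |t * (Phi t * Phi (-t))| ≤ phi t := by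
  have hsymm : Phi t * Phi (-t) = Phi |t| * Phi (-|t|) := by
    rcases abs_choice t with h | h <;> simp [h, mul_comm]
  rw [abs_mul, abs_of_nonneg (mul_nonneg (Phi_nonneg t) (Phi_nonneg (-t))), hsymm, ← phi_abs]
  calc |t| * (Phi |t| * Phi (-|t|)) ≤ |t| * Phi (-|t|) :=
        mul_le_mul_of_nonneg_left (mul_le_of_le_one_left (Phi_nonneg _) (Phi_le_one _))
          (abs_nonneg t)
    _ ≤ phi |t| := mul_Phi_neg_le_phi |t|

lemma tendsto_mul_Phi_mul_Phi_neg_cocompact :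
    Tendsto (fun t ↦ t * (Phi t * Phi (-t))) (cocompact ℝ) (𝓝 0) :=
  squeeze_zero_norm abs_mul_Phi_mul_Phi_neg_le tendsto_phi_cocompact

lemma two_mul_phi_sq (x : ℝ) : 2 * phi x ^ 2 = phi (√2 * x) * √2 / √π := by
  have hexp : exp (-x ^ 2 / 2) ^ 2 = exp (-(√2 * x) ^ 2 / 2) := by
    rw [← exp_nat_mul, mul_pow, sq_sqrt zero_le_two]; ring_nf
  have hpi : √π ^ 2 = π := sq_sqrt pi_pos.le
  have h2 : √2 ^ 2 = 2 := sq_sqrt zero_le_two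
  simp only [phi, div_pow, hexp, sqrt_mul zero_le_two, mul_pow, hpi, h2]
  field_simp
  exact hpi

/-- `t Φ(t) Φ(-t)` has derivative `Φ(t) Φ(-t) + t φ(t) (1 - 2 Φ(t))`; the second term is cancelled
by the derivative of `φ(t) (1 - 2 Φ(t))`, which leaves `-2 φ(t)²`, and `2 φ(t)²` is the derivative
of `Φ(√2 t) / √π`. -/
noncomputable def primitivePhiMulPhiNeg (t : ℝ) : ℝ :=
  t * (Phi t * Phi (-t)) + phi t * (1 - 2 * Phi t) + Phi (√2 * t) / √π

lemma hasDerivAt_primitivePhiMulPhiNeg (x : ℝ) :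
    HasDerivAt primitivePhiMulPhiNeg (Phi (-x) * Phi x) x := by
  have hPhi_neg : HasDerivAt (fun t ↦ Phi (-t)) (phi (-x) * -1) x :=
    (hasDerivAt_Phi (-x)).comp x (hasDerivAt_neg x)
  have hPhi_scaled : HasDerivAt (fun t ↦ Phi (√2 * t)) (phi (√2 * x) * √2) x := by
    have h := (hasDerivAt_Phi (√2 * x)).comp x ((hasDerivAt_id' x).const_mul √2)
    rwa [mul_one] at h
  have h := (((hasDerivAt_id x).mul ((hasDerivAt_Phi x).mul hPhi_neg)).add
    ((hasDerivAt_phi x).mul (((hasDerivAt_Phi x).const_mul 2).const_sub 1))).add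
    (hPhi_scaled.div_const √π)
  refine h.congr_deriv ?_
  simp only [Pi.mul_apply, id]
  rw [mul_div_assoc, ← mul_div_assoc, ← two_mul_phi_sq, phi_neg, Phi_neg]
  ring

lemma tendsto_primitivePhiMulPhiNeg_atTop :
    Tendsto primitivePhiMulPhiNeg atTop (𝓝 (1 / √π)) := by
  have h := ((tendsto_mul_Phi_mul_Phi_neg_cocompact.mono_left atTop_le_cocompact).add
    ((tendsto_phi_cocompact.mono_left atTop_le_cocompact).mul
      ((tendsto_Phi_atTop.const_mul 2).const_sub 1))).add
    ((tendsto_Phi_atTop.comp (tendsto_id.const_mul_atTop (sqrt_pos.2 zero_lt_two))).div_const √π)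
  rw [one_div]
  simp only [id_eq, Function.comp_apply, mul_one, zero_mul, add_zero, one_div, zero_add] at h
  exact h

lemma tendsto_primitivePhiMulPhiNeg_atBot : Tendsto primitivePhiMulPhiNeg atBot (𝓝 0) := by
  have h := ((tendsto_mul_Phi_mul_Phi_neg_cocompact.mono_left atBot_le_cocompact).add
    ((tendsto_phi_cocompact.mono_left atBot_le_cocompact).mul
      ((tendsto_Phi_atBot.const_mul 2).const_sub 1))).add
    ((tendsto_Phi_atBot.comp (tendsto_id.const_mul_atBot (sqrt_pos.2 zero_lt_two))).div_const √π)
  simp only [id_eq, Function.comp_apply, mul_zero, sub_zero, mul_one, add_zero, zero_div] at h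
  exact h

theorem stmt1 : ∫ t : ℝ, Phi (-t) * Phi t = 1 / Real.sqrt Real.pi := by
  have hint : Integrable fun t ↦ Phi (-t) * Phi t :=
    integrable_of_hasDerivAt_of_nonneg hasDerivAt_primitivePhiMulPhiNeg
      (fun t ↦ mul_nonneg (Phi_nonneg _) (Phi_nonneg _))
      tendsto_primitivePhiMulPhiNeg_atBot tendsto_primitivePhiMulPhiNeg_atTop
  rw [integral_of_hasDerivAt_of_tendsto hasDerivAt_primitivePhiMulPhiNeg hint
    tendsto_primitivePhiMulPhiNeg_atBot tendsto_primitivePhiMulPhiNeg_atTop, sub_zero]
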